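/- Biorthogonality: with L, μ, Δ, ℘ as above and a path ℓ : ℕ → ℤ (ℓ_0 = 0, increments in {0,1}), define the monic polynomials π_n(x) = ℘_n^{ℓ_n}(x)/Δ_n^{ℓ_n} and the Laurent polynomials ρ_n(x) = ((−1)^n/Δ_n^{ℓ_n})·x^{ℓ_{n+1}−n}·℘_n^{ℓ_{n+1}−1}(x), assuming all Δ_k^{ℓ_k} ≠ 0. Then L(ρ_m(z)·π_n(z)) = δ_{mn}·h_n where h_n = Δ_{n+1}^{ℓ_{n+1}}/Δ_n^{ℓ_n}. -/

import Mathlib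

/-- Shifted Toeplitz determinant `Δ_n^ℓ = det [μ(ℓ + j − i)]_{i,j = 1..n}`, with `Δ_0^ℓ = 1`. -/
noncomputable def Delta {F : Type*} [Field F] (μ : ℤ → F) (n : ℕ) (ℓ : ℤ) : F :=
  (Matrix.of fun i j : Fin n => μ (ℓ + (j : ℤ) - (i : ℤ))).det

/-- Bordered shifted Toeplitz determinant `℘_n^ℓ(x)`: the (n+1)×(n+1) determinant whose
rows `i = 1..n` are `(μ_{ℓ−i+1}, …, μ_{ℓ−i+1+n})` and whose last row is `(1, x, …, xⁿ)`. -/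
noncomputable def wp {F : Type*} [Field F] (μ : ℤ → F) (n : ℕ) (ℓ : ℤ) : Polynomial F :=
  (Matrix.of fun i j : Fin (n + 1) =>
    if (i : ℕ) < n then Polynomial.C (μ (ℓ - (i : ℤ) + (j : ℤ))) else Polynomial.X ^ (j : ℕ)).det

/-- The moments of a linear functional on Laurent polynomials. -/
noncomputable def mom {F : Type*} [Field F] (L : LaurentPolynomial F →ₗ[F] F) : ℤ → F :=
  fun k => L (LaurentPolynomial.T k)


/-!
Expanding `℘_n^ℓ` along its last row shows that `L(z^s ℘_n^ℓ)` is the Toeplitz determinant of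
`℘_n^ℓ` with its last row replaced by the moments `(μ_s, …, μ_{s+n})`. For `ℓ - n < s ≤ ℓ` this
row repeats an earlier one, and for `s = ℓ + 1` a cyclic shift of the rows turns the matrix into
the one of `Δ_{n+1}^{ℓ+1}`. Hence `℘_n^ℓ` is `L`-orthogonal to `z^s p` whenever `deg p ≤ d` and
`[s, s + d] ⊆ (ℓ - n, ℓ]`. For `m ≠ n` one factor of `ρ_m π_n` plays the role of `p`, the window
being placed correctly because `ℓ_k` and `k - ℓ_k` are both nondecreasing; for `m = n` only the
leading coefficient `Δ_n^{ℓ_n}` of `℘_n^{ℓ_n}` survives.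
-/

open Polynomial Finset
open scoped LaurentPolynomial
open LaurentPolynomial (T)

theorem map_T_mul_toLaurent_mul {R : Type*} [CommRing R] (L : R[T;T⁻¹] →ₗ[R] R) (s : ℤ)
    {p : R[X]} {d : ℕ} (hp : p.natDegree ≤ d) (q : R[T;T⁻¹]) :
    L (T s * toLaurent p * q) = ∑ i ∈ range (d + 1), p.coeff i * L (T (s + i) * q) := by
  conv_lhs => rw [p.as_sum_range' (d + 1) (Nat.lt_succ_of_le hp)]
  rw [map_sum, mul_sum, sum_mul, map_sum]
  refine sum_congr rfl fun i _ => ?_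
  rw [← smul_eq_mul (p.coeff i), ← L.map_smul, ← C_mul_X_pow_eq_monomial, toLaurent_C_mul_X_pow,
    LaurentPolynomial.T_add, LaurentPolynomial.smul_eq_C_mul]
  congr 1
  ring

section BorderedToeplitz

variable {F : Type*} [Field F]

noncomputable def wpCofactor (μ : ℤ → F) (n : ℕ) (ℓ : ℤ) (j : Fin (n + 1)) : F :=
  (-1) ^ (n + (j : ℕ)) * (Matrix.of fun i k : Fin n => μ (ℓ - i + (j.succAbove k : ℕ))).det

noncomputable def borderedMomentMatrix (μ : ℤ → F) (n : ℕ) (ℓ s : ℤ) :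
    Matrix (Fin (n + 1)) (Fin (n + 1)) F :=
  Matrix.of fun i j => if (i : ℕ) < n then μ (ℓ - i + j) else μ (s + j)

theorem wp_eq_sum (μ : ℤ → F) (n : ℕ) (ℓ : ℤ) :
    wp μ n ℓ = ∑ j : Fin (n + 1), C (wpCofactor μ n ℓ j) * X ^ (j : ℕ) := by
  rw [wp, Matrix.det_succ_row _ (Fin.last n)]
  refine sum_congr rfl fun j _ => ?_
  have hminor : (Matrix.of fun i j : Fin (n + 1) =>
        if (i : ℕ) < n then C (μ (ℓ - i + j)) else X ^ (j : ℕ)).submatrix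
          (Fin.last n).succAbove j.succAbove =
      C.mapMatrix (Matrix.of fun i k : Fin n => μ (ℓ - i + (j.succAbove k : ℕ))) := by
    ext i k
    simp [Fin.succAbove_last]
  rw [hminor, ← RingHom.map_det, wpCofactor]
  simp only [Matrix.of_apply, Fin.val_last, lt_irrefl, if_false, map_mul, map_pow, map_neg,
    map_one]
  ring

theorem det_borderedMomentMatrix (μ : ℤ → F) (n : ℕ) (ℓ s : ℤ) :
    (borderedMomentMatrix μ n ℓ s).det = ∑ j : Fin (n + 1), wpCofactor μ n ℓ j * μ (s + j) := by
  rw [Matrix.det_succ_row _ (Fin.last n)]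
  refine sum_congr rfl fun j _ => ?_
  have hminor : (borderedMomentMatrix μ n ℓ s).submatrix (Fin.last n).succAbove j.succAbove =
      Matrix.of fun i k : Fin n => μ (ℓ - i + (j.succAbove k : ℕ)) := by
    ext i k
    simp [borderedMomentMatrix, Fin.succAbove_last]
  rw [hminor, wpCofactor]
  simp only [borderedMomentMatrix, Matrix.of_apply, Fin.val_last, lt_irrefl, if_false]
  ring

theorem wpCofactor_last (μ : ℤ → F) (n : ℕ) (ℓ : ℤ) :
    wpCofactor μ n ℓ (Fin.last n) = Delta μ n ℓ := by
  rw [wpCofactor, Fin.val_last, ← two_mul, pow_mul, neg_one_sq, one_pow, one_mul, Delta]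
  congr 1
  ext i k
  simp only [Matrix.of_apply, Fin.succAbove_last, Fin.val_castSucc]
  congr 1
  ring

theorem natDegree_wp_le (μ : ℤ → F) (n : ℕ) (ℓ : ℤ) : (wp μ n ℓ).natDegree ≤ n := by
  rw [wp_eq_sum]
  exact natDegree_sum_le_of_forall_le _ _ fun j _ =>
    (natDegree_C_mul_X_pow_le _ _).trans (Nat.lt_succ_iff.mp j.isLt)

theorem coeff_wp_self (μ : ℤ → F) (n : ℕ) (ℓ : ℤ) : (wp μ n ℓ).coeff n = Delta μ n ℓ := by
  rw [wp_eq_sum, finsetSum_coeff, Fin.sum_univ_castSucc]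
  simp [wpCofactor_last, fun x : Fin n => x.isLt.ne']

theorem det_borderedMomentMatrix_eq_zero (μ : ℤ → F) {n : ℕ} {ℓ s : ℤ} (h₁ : ℓ - n < s)
    (h₂ : s ≤ ℓ) : (borderedMomentMatrix μ n ℓ s).det = 0 := by
  obtain ⟨t, rfl⟩ : ∃ t : ℕ, s = ℓ - t := ⟨(ℓ - s).toNat, by omega⟩
  refine Matrix.det_zero_of_row_eq (i := ⟨t, by omega⟩) (j := Fin.last n)
    (Fin.ne_of_lt (by rw [Fin.lt_def]; simp only [Fin.val_last]; omega)) ?_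
  funext j
  simp only [borderedMomentMatrix, Matrix.of_apply, Fin.val_last, lt_irrefl, if_false,
    show t < n by omega, if_true]

theorem det_borderedMomentMatrix_succ (μ : ℤ → F) (n : ℕ) (ℓ : ℤ) :
    (borderedMomentMatrix μ n ℓ (ℓ + 1)).det = (-1) ^ n * Delta μ (n + 1) (ℓ + 1) := by
  have hrotate : borderedMomentMatrix μ n ℓ (ℓ + 1) =
      (Matrix.of fun i j : Fin (n + 1) => μ (ℓ + 1 + j - i)).submatrix (finRotate (n + 1)) id := by
    ext i j
    simp only [borderedMomentMatrix, Matrix.of_apply, Matrix.submatrix_apply, id]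
    split_ifs with hi
    · rw [coe_finRotate_of_ne_last (Fin.ne_of_lt (Fin.lt_def.mpr hi))]
      push_cast
      congr 1
      ring
    · obtain rfl : i = Fin.last n := Fin.ext (by simp only [Fin.val_last]; omega)
      simp
  rw [hrotate, Matrix.det_permute, sign_finRotate, Delta]
  norm_cast

end BorderedToeplitz

section MomentFunctional

variable {F : Type*} [Field F] (L : F[T;T⁻¹] →ₗ[F] F)

theorem map_T_mul_wp (s : ℤ) (n : ℕ) (ℓ : ℤ) :
    L (T s * toLaurent (wp (mom L) n ℓ)) = (borderedMomentMatrix (mom L) n ℓ s).det := by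
  rw [det_borderedMomentMatrix, wp_eq_sum]
  simp only [map_sum, mul_sum, toLaurent_C_mul_X_pow]
  refine sum_congr rfl fun j _ => ?_
  rw [mul_left_comm, ← LaurentPolynomial.T_add, ← LaurentPolynomial.smul_eq_C_mul, L.map_smul,
    smul_eq_mul]
  rfl

theorem map_T_mul_mul_wp_eq_zero {s : ℤ} {p : F[X]} {d n : ℕ} {ℓ : ℤ} (hp : p.natDegree ≤ d)
    (h₁ : ℓ - n < s) (h₂ : s + d ≤ ℓ) :
    L (T s * toLaurent p * toLaurent (wp (mom L) n ℓ)) = 0 := by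
  rw [map_T_mul_toLaurent_mul L s hp]
  refine sum_eq_zero fun i hi => ?_
  have hid : (i : ℤ) ≤ d := by have := mem_range.mp hi; omega
  rw [map_T_mul_wp, det_borderedMomentMatrix_eq_zero _ (by omega) (by omega), mul_zero]

theorem map_T_mul_mul_wp_of_add_eq {s : ℤ} {p : F[X]} {d n : ℕ} {ℓ : ℤ} (hp : p.natDegree ≤ d)
    (hdn : d ≤ n) (hs : s + d = ℓ + 1) :
    L (T s * toLaurent p * toLaurent (wp (mom L) n ℓ)) =
      p.coeff d * ((-1) ^ n * Delta (mom L) (n + 1) (ℓ + 1)) := by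
  rw [map_T_mul_toLaurent_mul L s hp, sum_range_succ, map_T_mul_wp, hs,
    det_borderedMomentMatrix_succ]
  convert zero_add _
  refine sum_eq_zero fun i hi => ?_
  have hid : (i : ℤ) < d := by have := mem_range.mp hi; omega
  rw [map_T_mul_wp, det_borderedMomentMatrix_eq_zero _ (by omega) (by omega), mul_zero]

end MomentFunctional

theorem biorthogonality_general {F : Type*} [Field F] (L : LaurentPolynomial F →ₗ[F] F)
    (ℓ : ℕ → ℤ)
    (hinc : ∀ k, ℓ (k + 1) = ℓ k ∨ ℓ (k + 1) = ℓ k + 1)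
    (hΔ : ∀ k, Delta (mom L) k (ℓ k) ≠ 0) (m n : ℕ) :
    L ((((-1 : F) ^ m / Delta (mom L) m (ℓ m)) •
          (LaurentPolynomial.T (ℓ (m + 1) - (m : ℤ)) *
            Polynomial.toLaurent (wp (mom L) m (ℓ (m + 1) - 1)))) *
        ((Delta (mom L) n (ℓ n))⁻¹ • Polynomial.toLaurent (wp (mom L) n (ℓ n)))) =
      if m = n then Delta (mom L) (n + 1) (ℓ (n + 1)) / Delta (mom L) n (ℓ n) else 0 := by
  have hmono : Monotone ℓ :=
    monotone_nat_of_le_succ fun k => by rcases hinc k with h | h <;> omega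
  have hanti : Antitone fun k => ℓ k - k :=
    antitone_nat_of_succ_le fun k => by rcases hinc k with h | h <;> push_cast <;> omega
  rw [smul_mul_smul_comm, map_smul, smul_eq_mul]
  rcases lt_trichotomy m n with hmn | rfl | hnm
  · have h₁ : ℓ n - n ≤ ℓ (m + 1) - (m + 1 : ℕ) := hanti hmn
    have h₂ : ℓ (m + 1) ≤ ℓ n := hmono hmn
    push_cast at h₁
    rw [map_T_mul_mul_wp_eq_zero L (natDegree_wp_le _ m _) (by omega) (by omega), if_neg hmn.ne,
      mul_zero]
  · rw [mul_right_comm (T _), map_T_mul_mul_wp_of_add_eq L (natDegree_wp_le _ m _) le_rfl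
      (by ring), coeff_wp_self, sub_add_cancel, if_pos rfl]
    field_simp [hΔ m]
    rw [← pow_mul, pow_mul', neg_one_sq, one_pow, one_mul]
  · rw [mul_right_comm (T _), map_T_mul_mul_wp_eq_zero L (natDegree_wp_le _ n _) (by omega)
      (by omega), if_neg hnm.ne', mul_zero]

/-- Biorthogonality: with `π_n(x) = ℘_n^{ℓ_n}(x)/Δ_n^{ℓ_n}` and
`ρ_m(x) = ((−1)^m/Δ_m^{ℓ_m})·x^{ℓ_{m+1}−m}·℘_m^{ℓ_{m+1}−1}(x)`, one has
`L(ρ_m·π_n) = δ_{mn}·h_n` with `h_n = Δ_{n+1}^{ℓ_{n+1}}/Δ_n^{ℓ_n}`, provided all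
`Δ_k^{ℓ_k} ≠ 0` along the path. -/
theorem biorthogonality {F : Type*} [Field F] (L : LaurentPolynomial F →ₗ[F] F)
    (ℓ : ℕ → ℤ) (h0 : ℓ 0 = 0)
    (hinc : ∀ k, ℓ (k + 1) = ℓ k ∨ ℓ (k + 1) = ℓ k + 1)
    (hΔ : ∀ k, Delta (mom L) k (ℓ k) ≠ 0) (m n : ℕ) :
    L ((((-1 : F) ^ m / Delta (mom L) m (ℓ m)) •
          (LaurentPolynomial.T (ℓ (m + 1) - (m : ℤ)) *
            Polynomial.toLaurent (wp (mom L) m (ℓ (m + 1) - 1)))) *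
        ((Delta (mom L) n (ℓ n))⁻¹ • Polynomial.toLaurent (wp (mom L) n (ℓ n)))) =
      if m = n then Delta (mom L) (n + 1) (ℓ (n + 1)) / Delta (mom L) n (ℓ n) else 0 :=
  biorthogonality_general L ℓ hinc hΔ m n
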